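/- Let B be a symmetric bilinear form on an n-dimensional vector space V over 𝔽₂, of rank r, and write r = 2r₀ + δ with δ ∈ {0,1}. Then the index ν(B), i.e. the maximal dimension of a totally isotropic subspace of V, is exactly n − r₀ − δ: there exists a totally isotropic subspace of dimension n − r₀ − δ, and every totally isotropic subspace has dimension at most n − r₀ − δ. -/
import Mathlib
open Module Submodule LinearMap

private lemma zmod2_cases (x : ZMod 2) : x = 0 ∨ x = 1 := by revert x; decide
private lemma zmod2_add_self (x : ZMod 2) : x + x = 0 := by revert x; decide
private lemma zmod2_mul_self (x : ZMod 2) : x * x = x := by revert x; decide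

lemma two_mul_finrank_isotropic_le
    {V : Type*} [AddCommGroup V] [Module (ZMod 2) V] [FiniteDimensional (ZMod 2) V]
    (B : V →ₗ[ZMod 2] V →ₗ[ZMod 2] ZMod 2)
    (hsymm : ∀ x y : V, B x y = B y x)
    (W : Submodule (ZMod 2) V) (hiso : ∀ x ∈ W, ∀ y ∈ W, B x y = 0) :
    2 * finrank (ZMod 2) W + finrank (ZMod 2) (LinearMap.range B)
      ≤ 2 * finrank (ZMod 2) V := by
  classical
  set K := LinearMap.ker B with hK
  have h1 : finrank (ZMod 2) (LinearMap.range B) + finrank (ZMod 2) K = finrank (ZMod 2) V :=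
    LinearMap.finrank_range_add_finrank_ker B
  set f : W →ₗ[ZMod 2] (V →ₗ[ZMod 2] ZMod 2) := B.domRestrict W with hf
  have hkerf : LinearMap.ker f = Submodule.comap W.subtype K := by
    ext x; simp [hf, hK, LinearMap.mem_ker]
  have h2 : finrank (ZMod 2) (LinearMap.range f) + finrank (ZMod 2) (LinearMap.ker f)
      = finrank (ZMod 2) W := LinearMap.finrank_range_add_finrank_ker f
  have h3 : finrank (ZMod 2) (LinearMap.ker f) = finrank (ZMod 2) ↥(W ⊓ K) := by
    rw [hkerf]
    have h : Submodule.comap W.subtype K = Submodule.comap W.subtype (W ⊓ K) := by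
      ext x; simp
    rw [h]
    exact (Submodule.comapSubtypeEquivOfLe inf_le_left).finrank_eq
  have h4 : finrank (ZMod 2) ↥(W ⊔ K) + finrank (ZMod 2) ↥(W ⊓ K)
      = finrank (ZMod 2) W + finrank (ZMod 2) K :=
    Submodule.finrank_sup_add_finrank_inf_eq W K
  have h5 : LinearMap.range f ≤ Submodule.dualAnnihilator (W ⊔ K) := by
    rintro φ ⟨x, rfl⟩
    rw [Submodule.mem_dualAnnihilator]
    intro y hy
    rcases Submodule.mem_sup.mp hy with ⟨w, hw, z, hz, rfl⟩
    have hxw : B (x : V) w = 0 := hiso x x.2 w hw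
    have hzx : B z = 0 := hz
    have hxz : B (x : V) z = 0 := by rw [hsymm, hzx]; rfl
    simp [hf, hxw, hxz]
  have h6 : finrank (ZMod 2) ↥(W ⊔ K)
      + finrank (ZMod 2) ↥(Submodule.dualAnnihilator (W ⊔ K)) = finrank (ZMod 2) V := by
    have e : finrank (ZMod 2) (V ⧸ (W ⊔ K))
        = finrank (ZMod 2) ↥(Submodule.dualAnnihilator (W ⊔ K)) :=
      (Subspace.quotEquivAnnihilator (W ⊔ K)).finrank_eq
    have q := Submodule.finrank_quotient_add_finrank (W ⊔ K)
    omega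
  have h7 : finrank (ZMod 2) (LinearMap.range f)
      ≤ finrank (ZMod 2) ↥(Submodule.dualAnnihilator (W ⊔ K)) :=
    Submodule.finrank_mono h5
  have h8 : finrank (ZMod 2) ↥(W ⊓ K) ≤ finrank (ZMod 2) K :=
    Submodule.finrank_mono inf_le_right
  omega

set_option maxHeartbeats 2000000 in
lemma exists_isotropic (r₀ : ℕ) : ∀ (δ : ℕ), δ ≤ 1 →
    ∀ (V : Type u) [AddCommGroup V] [Module (ZMod 2) V] [FiniteDimensional (ZMod 2) V]
    (B : V →ₗ[ZMod 2] V →ₗ[ZMod 2] ZMod 2),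
    (∀ x y : V, B x y = B y x) →
    finrank (ZMod 2) (LinearMap.range B) = 2 * r₀ + δ →
    ∃ W : Submodule (ZMod 2) V, (∀ x ∈ W, ∀ y ∈ W, B x y = 0) ∧
      finrank (ZMod 2) W + r₀ + δ = finrank (ZMod 2) V := by
  induction r₀ with
  | zero =>
    intro δ hδ V _ _ _ B hsymm hr
    interval_cases δ
    · -- rank 0 : B = 0
      have hB : B = 0 := LinearMap.range_eq_bot.mp
        (Submodule.finrank_eq_zero.mp (by simpa using hr))
      exact ⟨⊤, by intro x _ y _; simp [hB], by simp [finrank_top]⟩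
    · refine ⟨LinearMap.ker B, ?_, ?_⟩
      · intro x hx y hy
        have hx0 : B x = 0 := hx
        simp [hx0]
      · have := LinearMap.finrank_range_add_finrank_ker B
        omega
  | succ m ih =>
    intro δ hδ V _ _ _ B hsymm hr
    by_cases hex : ∃ a b : V, B a a = 0 ∧ B b b = 0 ∧ B a b = 1
    · obtain ⟨a, b, haa, hbb, hab⟩ := hex
      have hba : B b a = 1 := by rw [← hsymm]; exact hab
      set L : V →ₗ[ZMod 2] (ZMod 2 × ZMod 2) := (B a).prod (B b) with hL
      set V' : Submodule (ZMod 2) V := LinearMap.ker L with hV'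
      have hmemV' : ∀ x : V, x ∈ V' ↔ B a x = 0 ∧ B b x = 0 := by
        intro x
        simp [hV', hL, LinearMap.mem_ker, LinearMap.prod_apply, Prod.ext_iff]
      have hLsurj : LinearMap.range L = ⊤ := by
        rw [eq_top_iff]
        rintro ⟨x, y⟩ -
        refine ⟨y • a + x • b, ?_⟩
        simp [hL, LinearMap.prod_apply, map_add, map_smul, haa, hbb, hab, hba,
          smul_eq_mul, Prod.ext_iff]
      have hdimV' : finrank (ZMod 2) ↥V' + 2 = finrank (ZMod 2) V := by
        have h := LinearMap.finrank_range_add_finrank_ker L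
        rw [hLsurj] at h
        have h2 : finrank (ZMod 2) (⊤ : Submodule (ZMod 2) (ZMod 2 × ZMod 2)) = 2 := by
          simp [finrank_top]
        rw [h2, ← hV'] at h
        omega
      set B' : ↥V' →ₗ[ZMod 2] ↥V' →ₗ[ZMod 2] ZMod 2 :=
        B.compl₁₂ V'.subtype V'.subtype with hB'
      have hB'app : ∀ x y : ↥V', B' x y = B (x : V) (y : V) := fun x y => rfl
      have hsymm' : ∀ x y : ↥V', B' x y = B' y x := by
        intro x y; rw [hB'app, hB'app]; exact hsymm _ _
      have hkK : LinearMap.ker B ≤ V' := by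
        intro z hz
        have hz0 : B z = 0 := hz
        rw [hmemV']
        constructor <;> rw [hsymm] <;> simp [hz0]
      have hkerB' : LinearMap.ker B' = Submodule.comap V'.subtype (LinearMap.ker B) := by
        ext v
        simp only [LinearMap.mem_ker, Submodule.mem_comap, Submodule.coe_subtype]
        constructor
        · intro h
          obtain ⟨hav, hbv⟩ := (hmemV' (v : V)).mp v.2
          ext u
          have hu' : u - (B b u) • a - (B a u) • b ∈ V' := by
            rw [hmemV']
            constructor <;>
              simp [map_sub, map_smul, haa, hbb, hab, hba, smul_eq_mul, mul_comm]
          have h0 : B (v : V) (u - (B b u) • a - (B a u) • b) = 0 := by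
            have := DFunLike.congr_fun h (⟨_, hu'⟩ : ↥V')
            simpa [hB'app] using this
          have hva : B (v : V) a = 0 := by rw [hsymm]; exact hav
          have hvb : B (v : V) b = 0 := by rw [hsymm]; exact hbv
          rw [map_sub, map_sub, map_smul, map_smul, hva, hvb] at h0
          simpa using h0
        · intro h
          ext u
          simp [hB'app, h]
      have hdimker : finrank (ZMod 2) (LinearMap.ker B')
          = finrank (ZMod 2) (LinearMap.ker B) := by
        rw [hkerB']
        exact (Submodule.comapSubtypeEquivOfLe hkK).finrank_eq
      have hrank' : finrank (ZMod 2) (LinearMap.range B') = 2 * m + δ := by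
        have g1 := LinearMap.finrank_range_add_finrank_ker B'
        have g2 := LinearMap.finrank_range_add_finrank_ker B
        omega
      obtain ⟨W', hiso', hdim'⟩ := ih δ hδ ↥V' B' hsymm' hrank'
      set Wm : Submodule (ZMod 2) V := W'.map V'.subtype with hWm
      have hWmV' : Wm ≤ V' := Submodule.map_subtype_le V' W'
      have haWm : a ∉ Wm := by
        intro ha
        have := ((hmemV' a).mp (hWmV' ha)).2
        rw [hba] at this
        exact one_ne_zero this
      have ha0 : a ≠ 0 := by
        rintro rfl
        rw [show B (0 : V) b = 0 by simp] at hab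
        exact one_ne_zero hab.symm
      refine ⟨Wm ⊔ Submodule.span (ZMod 2) {a}, ?_, ?_⟩
      · intro x hx y hy
        rcases Submodule.mem_sup.mp hx with ⟨w, hw, s, hs, rfl⟩
        rcases Submodule.mem_sup.mp hy with ⟨w', hw', s', hs', rfl⟩
        obtain ⟨c, rfl⟩ := Submodule.mem_span_singleton.mp hs
        obtain ⟨c', rfl⟩ := Submodule.mem_span_singleton.mp hs'
        rcases Submodule.mem_map.mp hw with ⟨w₀, hw₀, rfl⟩
        rcases Submodule.mem_map.mp hw' with ⟨w₀', hw₀', rfl⟩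
        have h1 : B (w₀ : V) (w₀' : V) = 0 := by
          rw [← hB'app]; exact hiso' w₀ hw₀ w₀' hw₀'
        have haw : B a (w₀ : V) = 0 := ((hmemV' _).mp w₀.2).1
        have haw' : B a (w₀' : V) = 0 := ((hmemV' _).mp w₀'.2).1
        have hw0a : B (w₀ : V) a = 0 := by rw [hsymm]; exact haw
        simp [map_add, map_smul, smul_eq_mul, h1, haw', hw0a, haa]
      · have hinf : Wm ⊓ Submodule.span (ZMod 2) {a} = ⊥ := by
          rw [eq_bot_iff]
          rintro x ⟨hx1, hx2⟩
          obtain ⟨c, rfl⟩ := Submodule.mem_span_singleton.mp hx2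
          rcases zmod2_cases c with rfl | rfl
          · simp
          · rw [one_smul] at hx1
            exact absurd hx1 haWm
        have hsup := Submodule.finrank_sup_add_finrank_inf_eq Wm
          (Submodule.span (ZMod 2) {a})
        rw [hinf, finrank_span_singleton ha0, finrank_bot] at hsup
        have hWmdim : finrank (ZMod 2) Wm = finrank (ZMod 2) W' :=
          Submodule.finrank_map_subtype_eq V' W'
        omega
    · have hno : ∀ a b : V, B a a = 0 → B b b = 0 → B a b = 0 := by
        intro a b ha hb
        rcases zmod2_cases (B a b) with h | h
        · exact h
        · exact absurd ⟨a, b, ha, hb, h⟩ hex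
      have haddq : ∀ x y : V, B (x + y) (x + y) = B x x + B y y := by
        intro x y
        have hc : B x y + B x y = 0 := zmod2_add_self _
        simp only [map_add, LinearMap.add_apply]
        rw [hsymm y x]
        linear_combination hc
      set q : V →ₗ[ZMod 2] ZMod 2 :=
        { toFun := fun x => B x x
          map_add' := haddq
          map_smul' := by
            intro c x
            simp only [map_smul, LinearMap.smul_apply, smul_eq_mul, RingHom.id_apply]
            rw [← mul_assoc, zmod2_mul_self] } with hq
      set N := LinearMap.ker q with hN
      have hisoN : ∀ x ∈ N, ∀ y ∈ N, B x y = 0 := by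
        intro x hx y hy
        exact hno x y (LinearMap.mem_ker.mp hx) (LinearMap.mem_ker.mp hy)
      have hub := two_mul_finrank_isotropic_le B hsymm N hisoN
      have hq2 := LinearMap.finrank_range_add_finrank_ker q
      rw [← hN] at hq2
      have hq1 : finrank (ZMod 2) (LinearMap.range q) ≤ 1 := by
        have := Submodule.finrank_le (LinearMap.range q)
        simpa using this
      refine ⟨N, hisoN, ?_⟩
      rw [hr] at hub
      omega


/-- For a symmetric bilinear form of rank `r = 2r₀ + δ` (`δ ∈ {0,1}`) on an
`n`-dimensional `𝔽₂`-vector space, the maximal dimension of a totally isotropic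
subspace is exactly `n - r₀ - δ`. -/
theorem index_of_symmetric_form
    (V : Type*) [AddCommGroup V] [Module (ZMod 2) V] [FiniteDimensional (ZMod 2) V]
    (n r r₀ δ : ℕ) (hn : Module.finrank (ZMod 2) V = n)
    (B : V →ₗ[ZMod 2] V →ₗ[ZMod 2] ZMod 2)
    (hsymm : ∀ x y : V, B x y = B y x)
    (hr : Module.finrank (ZMod 2) (LinearMap.range B) = r)
    (hrd : r = 2 * r₀ + δ) (hδ : δ ≤ 1) :
    (∃ W : Submodule (ZMod 2) V, (∀ x ∈ W, ∀ y ∈ W, B x y = 0) ∧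
        Module.finrank (ZMod 2) W = n - r₀ - δ) ∧
    (∀ W : Submodule (ZMod 2) V, (∀ x ∈ W, ∀ y ∈ W, B x y = 0) →
        Module.finrank (ZMod 2) W ≤ n - r₀ - δ) := by
  obtain ⟨W, hWiso, hWd⟩ := exists_isotropic r₀ δ hδ V B hsymm (hr.trans hrd)
  rw [hn] at hWd
  constructor
  · exact ⟨W, hWiso, by omega⟩
  · intro W' hW'iso
    have hub := two_mul_finrank_isotropic_le B hsymm W' hW'iso
    rw [hn, hr, hrd] at hub
    omega
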